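/- arXiv:2209.11261 — 2 statements merged into one kernel-verified Lean document; each statement's English description precedes it below -/
import Mathlib

section
/- Let q(x,t) = 2(ρ₁ − ρ₂) / (γ₂^{-1} e^{−2ρ₂x − 4iρ₂²t} − γ₁ e^{−2ρ₁x − 4iρ₁²t}) with ρ₁ > 0 > ρ₂, |γ₁| = |γ₂| = 1, and ρ₁ ≠ −ρ₂. Then the denominator vanishes exactly at the points (x,t) = (0, tₙ), n ∈ ℤ, where tₙ = (arg(γ₁γ₂) + 2πn)/(4(ρ₁² − ρ₂²)). -/
/-!
Because `γ₁γ₂ = e^{iθ}`, the denominator vanishes iff `e^{−2ρ₂x−4iρ₂²t} = e^{iθ−2ρ₁x−4iρ₁²t}`,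
i.e. iff the two exponents differ by `2πin`. Real parts give `(ρ₁ − ρ₂)x = 0`, so `x = 0`;
imaginary parts give `4(ρ₁² − ρ₂²)t = θ + 2πn`.
-/

open Real

/-- Denominator of the one-soliton solution of the focusing nonlocal NLS:
`D(x,t) = γ₂⁻¹ e^{−2ρ₂x−4iρ₂²t} − γ₁ e^{−2ρ₁x−4iρ₁²t}`. -/
noncomputable def solDen (ρ₁ ρ₂ : ℝ) (γ₁ γ₂ : ℂ) (x t : ℝ) : ℂ :=
  γ₂⁻¹ * Complex.exp (-2 * (ρ₂ : ℂ) * (x : ℂ) - 4 * Complex.I * (ρ₂ : ℂ) ^ 2 * (t : ℂ)) -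
    γ₁ * Complex.exp (-2 * (ρ₁ : ℂ) * (x : ℂ) - 4 * Complex.I * (ρ₁ : ℂ) ^ 2 * (t : ℂ))

open Complex in
lemma solDen_eq_zero_iff_exp_eq {ρ₁ ρ₂ θ : ℝ} {γ₁ γ₂ : ℂ}
    (hθ : cexp (I * θ) = γ₁ * γ₂) (x t : ℝ) :
    solDen ρ₁ ρ₂ γ₁ γ₂ x t = 0 ↔
      cexp (-2 * ρ₂ * x - 4 * I * ρ₂ ^ 2 * t) =
        cexp (I * θ + (-2 * ρ₁ * x - 4 * I * ρ₁ ^ 2 * t)) := by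
  have hγ₂ : γ₂ ≠ 0 := right_ne_zero_of_mul (hθ ▸ Complex.exp_ne_zero _)
  rw [solDen, sub_eq_zero, inv_mul_eq_iff_eq_mul₀ hγ₂, Complex.exp_add, hθ, ← mul_assoc,
    mul_comm γ₂ γ₁]

open Complex in
lemma solDen_exponent_eq_iff (ρ₁ ρ₂ θ x t : ℝ) (n : ℤ) :
    (-2 * ρ₂ * x - 4 * I * ρ₂ ^ 2 * t : ℂ) =
        I * θ + (-2 * ρ₁ * x - 4 * I * ρ₁ ^ 2 * t) + n * (2 * π * I) ↔
      (ρ₁ - ρ₂) * x = 0 ∧ t * (4 * (ρ₁ ^ 2 - ρ₂ ^ 2)) = θ + 2 * π * n := by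
  simp only [Complex.ext_iff, sub_re, sub_im, add_re, add_im, mul_re, mul_im, ofReal_re,
    ofReal_im, I_re, I_im, intCast_re, intCast_im, neg_re, neg_im, re_ofNat, im_ofNat,
    ← ofReal_pow]
  constructor <;> rintro ⟨hre, him⟩ <;> constructor <;> linarith

theorem stmt15_general (ρ₁ ρ₂ θ : ℝ) (γ₁ γ₂ : ℂ)
    (h1 : 0 < ρ₁) (h2 : ρ₂ < 0) (hne : ρ₁ ≠ -ρ₂)
    (hθ : Complex.exp (Complex.I * (θ : ℂ)) = γ₁ * γ₂) :
    ∀ x t : ℝ, solDen ρ₁ ρ₂ γ₁ γ₂ x t = 0 ↔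
      (x = 0 ∧ ∃ n : ℤ, t = (θ + 2 * π * n) / (4 * (ρ₁ ^ 2 - ρ₂ ^ 2))) := by
  intro x t
  have hdiff : ρ₁ - ρ₂ ≠ 0 := by linarith
  have hsq : 4 * (ρ₁ ^ 2 - ρ₂ ^ 2) ≠ 0 := by
    rw [sq_sub_sq]
    exact mul_ne_zero four_ne_zero (mul_ne_zero (by contrapose! hne; linarith) hdiff)
  rw [solDen_eq_zero_iff_exp_eq hθ, Complex.exp_eq_exp_iff_exists_int]
  simp only [solDen_exponent_eq_iff, mul_eq_zero, hdiff, false_or, eq_div_iff hsq,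
    exists_and_left]

/-- for the one-soliton denominator with `ρ₁ > 0 > ρ₂`,
`|γ₁| = |γ₂| = 1`, `ρ₁ ≠ −ρ₂`, and `θ` a fixed argument of `γ₁γ₂`, the zeros of
the denominator are exactly the points `(0, tₙ)`, `n ∈ ℤ`, with
`tₙ = (θ + 2πn)/(4(ρ₁² − ρ₂²))`. -/
theorem stmt15 (ρ₁ ρ₂ θ : ℝ) (γ₁ γ₂ : ℂ)
    (h1 : 0 < ρ₁) (h2 : ρ₂ < 0) (hne : ρ₁ ≠ -ρ₂)
    (hg1 : ‖γ₁‖ = 1) (hg2 : ‖γ₂‖ = 1)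
    (hθ : Complex.exp (Complex.I * (θ : ℂ)) = γ₁ * γ₂) :
    ∀ x t : ℝ, solDen ρ₁ ρ₂ γ₁ γ₂ x t = 0 ↔
      (x = 0 ∧ ∃ n : ℤ, t = (θ + 2 * π * n) / (4 * (ρ₁ ^ 2 - ρ₂ ^ 2))) :=
  stmt15_general ρ₁ ρ₂ θ γ₁ γ₂ h1 h2 hne hθ
end

section
/- Let q(x,t) = 2(ρ₁ − ρ₂)/(γ₂^{-1} e^{−2ρ₂x−4iρ₂²t} − γ₁ e^{−2ρ₁x−4iρ₁²t}) with ρ₁ > 0 > ρ₂ and |γ₁| = |γ₂| = 1. Then at every point (x,t) where the denominator does not vanish, q satisfies the focusing nonlocal NLS equation i∂ₜq(x,t) + ∂ₓ²q(x,t) + 2q(x,t)²\overline{q(−x,t)} = 0. -/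
/-- The one-soliton solution
`q(x,t) = 2(ρ₁−ρ₂)/(γ₂⁻¹ e^{−2ρ₂x−4iρ₂²t} − γ₁ e^{−2ρ₁x−4iρ₁²t})`. -/
noncomputable def solQ (ρ₁ ρ₂ : ℝ) (γ₁ γ₂ : ℂ) (x t : ℝ) : ℂ :=
  2 * ((ρ₁ : ℂ) - (ρ₂ : ℂ)) / solDen ρ₁ ρ₂ γ₁ γ₂ x t

open Complex ComplexConjugate

section QuotientRule

variable {𝕜 𝕜' : Type*} [NontriviallyNormedField 𝕜] [NontriviallyNormedField 𝕜']
  [NormedAlgebra 𝕜 𝕜']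

theorem deriv_deriv_const_div {f f' : 𝕜 → 𝕜'} {f'' : 𝕜'} {x : 𝕜} (c : 𝕜')
    (hf : ∀ y, HasDerivAt f (f' y) y) (hf' : HasDerivAt f' f'' x) (hx : f x ≠ 0) :
    deriv (deriv fun y => c / f y) x = c * (2 * f' x ^ 2 - f x * f'') / f x ^ 3 := by
  have hfirst : deriv (fun y => c / f y) =ᶠ[nhds x] fun y => -c * f' y / f y ^ 2 := by
    filter_upwards [(hf x).continuousAt.eventually_ne hx] with y hy
    rw [deriv_const_div c (hf y).differentiableAt hy, (hf y).deriv]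
  rw [hfirst.deriv_eq, ((hf'.const_mul (-c)).fun_div ((hf x).fun_pow 2) (pow_ne_zero 2 hx)).deriv]
  field_simp
  ring

end QuotientRule

noncomputable def expMode (ρ x t : ℝ) : ℂ :=
  cexp (-2 * (ρ : ℂ) * (x : ℂ) - 4 * I * (ρ : ℂ) ^ 2 * (t : ℂ))

theorem hasDerivAt_expMode_space (ρ x t : ℝ) :
    HasDerivAt (fun y => expMode ρ y t) (-2 * ρ * expMode ρ x t) x := by
  have := (((hasDerivAt_id x).ofReal_comp.const_mul (-2 * (ρ : ℂ))).sub_const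
    (4 * I * (ρ : ℂ) ^ 2 * (t : ℂ))).cexp
  simpa [expMode, mul_comm] using this

theorem hasDerivAt_expMode_time (ρ x t : ℝ) :
    HasDerivAt (fun τ => expMode ρ x τ) (-4 * I * ρ ^ 2 * expMode ρ x t) t := by
  have := (((hasDerivAt_id t).ofReal_comp.const_mul (4 * I * (ρ : ℂ) ^ 2)).const_sub
    (-2 * (ρ : ℂ) * (x : ℂ))).cexp
  simpa [expMode, mul_comm] using this

theorem conj_expMode_neg (ρ x t : ℝ) : conj (expMode ρ (-x) t) = (expMode ρ x t)⁻¹ := by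
  rw [expMode, expMode, ← exp_conj, ← exp_neg]
  congr 1
  simp only [map_sub, map_mul, map_neg, map_pow, map_ofNat, conj_ofReal, conj_I, ofReal_neg]
  ring

theorem expMode_ne_zero (ρ x t : ℝ) : expMode ρ x t ≠ 0 := exp_ne_zero _

theorem solDen_eq (ρ₁ ρ₂ : ℝ) (γ₁ γ₂ : ℂ) (x t : ℝ) :
    solDen ρ₁ ρ₂ γ₁ γ₂ x t = γ₂⁻¹ * expMode ρ₂ x t - γ₁ * expMode ρ₁ x t := rfl

section OneSoliton

variable (ρ₁ ρ₂ : ℝ) (γ₁ γ₂ : ℂ)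

theorem hasDerivAt_expMode_combination_space (a b : ℂ) (x t : ℝ) :
    HasDerivAt (fun y => a * expMode ρ₂ y t - b * expMode ρ₁ y t)
      (-2 * ρ₂ * a * expMode ρ₂ x t - -2 * ρ₁ * b * expMode ρ₁ x t) x :=
  (((hasDerivAt_expMode_space ρ₂ x t).const_mul a).fun_sub
    ((hasDerivAt_expMode_space ρ₁ x t).const_mul b)).congr_deriv (by ring)

theorem hasDerivAt_solDen_time (x t : ℝ) :
    HasDerivAt (fun τ => solDen ρ₁ ρ₂ γ₁ γ₂ x τ)
      (-4 * I * (ρ₂ ^ 2 * (γ₂⁻¹ * expMode ρ₂ x t) - ρ₁ ^ 2 * (γ₁ * expMode ρ₁ x t))) t :=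
  (((hasDerivAt_expMode_time ρ₂ x t).const_mul γ₂⁻¹).fun_sub
    ((hasDerivAt_expMode_time ρ₁ x t).const_mul γ₁)).congr_deriv (by ring)

theorem deriv_solQ_time {x t : ℝ} (hx : solDen ρ₁ ρ₂ γ₁ γ₂ x t ≠ 0) :
    deriv (fun τ => solQ ρ₁ ρ₂ γ₁ γ₂ x τ) t =
      -(2 * (ρ₁ - ρ₂)) *
        (-4 * I * (ρ₂ ^ 2 * (γ₂⁻¹ * expMode ρ₂ x t) - ρ₁ ^ 2 * (γ₁ * expMode ρ₁ x t))) /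
        solDen ρ₁ ρ₂ γ₁ γ₂ x t ^ 2 := by
  have hD := hasDerivAt_solDen_time ρ₁ ρ₂ γ₁ γ₂ x t
  rw [← hD.deriv]
  exact deriv_const_div _ hD.differentiableAt hx

theorem deriv_deriv_solQ_space {x t : ℝ} (hx : solDen ρ₁ ρ₂ γ₁ γ₂ x t ≠ 0) :
    deriv (deriv fun y => solQ ρ₁ ρ₂ γ₁ γ₂ y t) x =
      2 * (ρ₁ - ρ₂) *
        (2 * (-2 * ρ₂ * (γ₂⁻¹ * expMode ρ₂ x t) + 2 * ρ₁ * (γ₁ * expMode ρ₁ x t)) ^ 2 -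
          solDen ρ₁ ρ₂ γ₁ γ₂ x t *
            (4 * ρ₂ ^ 2 * (γ₂⁻¹ * expMode ρ₂ x t) - 4 * ρ₁ ^ 2 * (γ₁ * expMode ρ₁ x t))) /
        solDen ρ₁ ρ₂ γ₁ γ₂ x t ^ 3 :=
  (deriv_deriv_const_div (f := fun y => solDen ρ₁ ρ₂ γ₁ γ₂ y t)
    (f' := fun y => -2 * ρ₂ * γ₂⁻¹ * expMode ρ₂ y t - -2 * ρ₁ * γ₁ * expMode ρ₁ y t) _
    (hasDerivAt_expMode_combination_space ρ₁ ρ₂ γ₂⁻¹ γ₁ · t)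
    (hasDerivAt_expMode_combination_space ρ₁ ρ₂ _ _ x t) hx).trans (by ring)

variable {γ₁ γ₂}

theorem conj_solDen_neg (hγ₁ : ‖γ₁‖ = 1) (hγ₂ : ‖γ₂‖ = 1) (x t : ℝ) :
    conj (solDen ρ₁ ρ₂ γ₁ γ₂ (-x) t) =
      (γ₂⁻¹ * expMode ρ₂ x t)⁻¹ - (γ₁ * expMode ρ₁ x t)⁻¹ := by
  rw [solDen_eq, map_sub, map_mul, map_mul, conj_expMode_neg, conj_expMode_neg, map_inv₀,
    ← inv_eq_conj hγ₂, ← inv_eq_conj hγ₁, mul_inv, mul_inv, inv_inv]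

theorem conj_solQ_neg (hγ₁ : ‖γ₁‖ = 1) (hγ₂ : ‖γ₂‖ = 1) (x t : ℝ) :
    conj (solQ ρ₁ ρ₂ γ₁ γ₂ (-x) t) =
      -(2 * (ρ₁ - ρ₂)) * (γ₂⁻¹ * expMode ρ₂ x t) * (γ₁ * expMode ρ₁ x t) /
        solDen ρ₁ ρ₂ γ₁ γ₂ x t := by
  have hu : γ₂⁻¹ * expMode ρ₂ x t ≠ 0 :=
    mul_ne_zero (inv_ne_zero (norm_ne_zero_iff.mp (by simp [hγ₂]))) (expMode_ne_zero _ _ _)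
  have hv : γ₁ * expMode ρ₁ x t ≠ 0 :=
    mul_ne_zero (norm_ne_zero_iff.mp (by simp [hγ₁])) (expMode_ne_zero _ _ _)
  rw [solQ, map_div₀, conj_solDen_neg ρ₁ ρ₂ hγ₁ hγ₂, inv_sub_inv hu hv, solDen_eq]
  simp only [map_mul, map_sub, map_ofNat, conj_ofReal]
  rw [div_div_eq_mul_div, ← neg_sub (γ₂⁻¹ * _), div_neg]
  ring

end OneSoliton

theorem stmt16_general (ρ₁ ρ₂ : ℝ) (γ₁ γ₂ : ℂ)
    (hg1 : ‖γ₁‖ = 1) (hg2 : ‖γ₂‖ = 1) :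
    ∀ x t : ℝ, solDen ρ₁ ρ₂ γ₁ γ₂ x t ≠ 0 → solDen ρ₁ ρ₂ γ₁ γ₂ (-x) t ≠ 0 →
      Complex.I * deriv (fun τ : ℝ => solQ ρ₁ ρ₂ γ₁ γ₂ x τ) t +
        deriv (deriv (fun y : ℝ => solQ ρ₁ ρ₂ γ₁ γ₂ y t)) x +
        2 * (solQ ρ₁ ρ₂ γ₁ γ₂ x t) ^ 2 * (starRingEnd ℂ) (solQ ρ₁ ρ₂ γ₁ γ₂ (-x) t) = 0 := by
  intro x t hx _
  rw [deriv_solQ_time ρ₁ ρ₂ γ₁ γ₂ hx, deriv_deriv_solQ_space ρ₁ ρ₂ γ₁ γ₂ hx,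
    conj_solQ_neg ρ₁ ρ₂ hg1 hg2, solQ]
  rw [solDen_eq] at hx ⊢
  generalize γ₂⁻¹ * expMode ρ₂ x t = u at hx ⊢
  generalize γ₁ * expMode ρ₁ x t = v at hx ⊢
  field_simp
  linear_combination 8 * (ρ₁ - ρ₂) * (ρ₂ ^ 2 * u - ρ₁ ^ 2 * v) * (u - v) * I_sq

/-- the one-soliton function satisfies the focusing nonlocal NLS
equation `i∂ₜq + ∂ₓ²q + 2q²·conj(q(−x,t)) = 0` at every point where the
denominator does not vanish (at `x` and at the reflected point `−x`). -/
theorem stmt16 (ρ₁ ρ₂ : ℝ) (γ₁ γ₂ : ℂ)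
    (h1 : 0 < ρ₁) (h2 : ρ₂ < 0)
    (hg1 : ‖γ₁‖ = 1) (hg2 : ‖γ₂‖ = 1) :
    ∀ x t : ℝ, solDen ρ₁ ρ₂ γ₁ γ₂ x t ≠ 0 → solDen ρ₁ ρ₂ γ₁ γ₂ (-x) t ≠ 0 →
      Complex.I * deriv (fun τ : ℝ => solQ ρ₁ ρ₂ γ₁ γ₂ x τ) t +
        deriv (deriv (fun y : ℝ => solQ ρ₁ ρ₂ γ₁ γ₂ y t)) x +
        2 * (solQ ρ₁ ρ₂ γ₁ γ₂ x t) ^ 2 * (starRingEnd ℂ) (solQ ρ₁ ρ₂ γ₁ γ₂ (-x) t) = 0 :=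
  stmt16_general ρ₁ ρ₂ γ₁ γ₂ hg1 hg2
end
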